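/- Fix an admissible sequence of probability measures ν_n on Δ^{n-1} and an integer p ≥ 0. Let F_n : Δ^{n-1} → ℝ be any measurable function such that F_n(ℓ) = ∑_{i=0}^p C(n-1,i) for ℓ ∈ Γ_{p+2} and 0 ≤ F_n(ℓ) ≤ 2(n-1)^p everywhere on Δ^{n-1}. Then there exist constants C > 0 and 0 < a < 1 with |∫_{Δ^{n-1}} F_n dν_n − ∑_{i=0}^p C(n-1,i)| < C·a^n for all n ≥ 3. -/

import Mathlib

open MeasureTheory Finset Filter

/-- The open standard simplex Δ^m ⊂ ℝ^{m+1}. -/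
def Simplex (m : ℕ) : Set (Fin (m+1) → ℝ) :=
  {ℓ | (∀ i, 0 < ℓ i) ∧ ∑ i, ℓ i = 1}

/-- Parametrization of the hyperplane ∑ ℓ i = 1 by ℝ^m. -/
noncomputable def emb (m : ℕ) (x : Fin m → ℝ) : Fin (m+1) → ℝ :=
  Fin.snoc x (1 - ∑ i, x i)

/-- Normalized Lebesgue measure of a subset of the simplex Δ^m,
computed as a ratio of Lebesgue volumes in the parametrizing chart. -/
noncomputable def simplexMeasure (m : ℕ) (A : Set (Fin (m+1) → ℝ)) : ENNReal :=
  volume (emb m ⁻¹' A) / volume (emb m ⁻¹' (Simplex m))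

/-- The set Γ_p of length vectors for which every p-element subset is short. -/
def Gamma (m p : ℕ) : Set (Fin (m+1) → ℝ) :=
  {ℓ ∈ Simplex m | ∀ J : Finset (Fin (m+1)), J.card = p → ∑ i ∈ J, ℓ i < 1/2}

/-- The set Λ_p where some coordinate is ≥ 1/(2p). -/
def Lambda (m p : ℕ) : Set (Fin (m+1) → ℝ) :=
  {ℓ ∈ Simplex m | ∃ i, 1/(2*(p:ℝ)) ≤ ℓ i}

/-- The normalized Lebesgue measure μ_n on the simplex Δ^m ⊂ ℝ^{m+1},
as an actual measure on ℝ^{m+1} (supported on the simplex). -/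
noncomputable def simplexProb (m : ℕ) : Measure (Fin (m+1) → ℝ) :=
  (m.factorial : ENNReal) • Measure.map (emb m) (volume.restrict (emb m ⁻¹' Simplex m))

/-!
Off `Γ_{p+2}` the integrand equals `S = ∑_{i ≤ p} C(m,i)`, and on the simplex `|F - S|` is
polynomial in `m`, so the error is at most a polynomial times `ν(Δ \ Γ_{p+2})`. Since
`Δ \ Γ_q ⊆ Λ_q`, admissibility bounds the density there by `A·b^{m+1}` with `b < 2`, and the
uniform measure of `Δ \ Γ_q` is `O(poly(m)·2^{-m})`: in the chart `emb`, a point of `Δ \ Γ_q`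
lies in one of `C(m+1, q)` slabs of the unit cube in which `k ≥ m - q` coordinates sum to at
most `1/2`, a slab of volume `≤ 2^{-k}/k!`. The error is therefore `O(poly(m)·(b/2)^m)`.
-/

open scoped ENNReal

lemma abs_integral_sub_le_mul_measureReal {α : Type*} [MeasurableSpace α] {ν : Measure α}
    [IsProbabilityMeasure ν] {F : α → ℝ} {c M : ℝ} {s : Set α} (hs : MeasurableSet s)
    (hF : AEStronglyMeasurable F ν) (hFs : ∀ᵐ x ∂ν, |F x - c| ≤ s.indicator (fun _ => M) x) :
    |∫ x, F x ∂ν - c| ≤ M * ν.real s := by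
  have hind : Integrable (s.indicator fun _ => M) ν := (integrable_const M).indicator hs
  have hFc : Integrable (fun x => F x - c) ν := hind.mono' (hF.sub aestronglyMeasurable_const) hFs
  have hFint : Integrable F ν := by simpa using integrable_add_const_iff.1 hFc
  calc |∫ x, F x ∂ν - c| = ‖∫ x, (F x - c) ∂ν‖ := by
        rw [integral_sub hFint (integrable_const c), integral_const, probReal_univ, one_smul,
          Real.norm_eq_abs]
    _ ≤ ∫ x, s.indicator (fun _ => M) x ∂ν := norm_integral_le_of_norm_le hind hFs
    _ = M * ν.real s := by rw [integral_indicator_const M hs, smul_eq_mul, mul_comm]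

lemma exists_pow_mul_pow_lt (r : ℕ) {t : ℝ} (ht₀ : 0 ≤ t) (ht₁ : t < 1) :
    ∃ C > (0 : ℝ), ∃ a ∈ Set.Ioo (0 : ℝ) 1, ∀ n : ℕ, (n : ℝ) ^ r * t ^ n < C * a ^ n := by
  set a := (1 + t) / 2 with ha
  have ha₀ : 0 < a := by positivity
  have hs : |t / a| < 1 := by
    rw [abs_of_nonneg (by positivity), div_lt_one ha₀]
    linarith [ha]
  obtain ⟨C₀, hC₀⟩ := (tendsto_pow_const_mul_const_pow_of_abs_lt_one r hs).bddAbove_range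
  refine ⟨max C₀ 0 + 1, by positivity, a, ⟨ha₀, by linarith [ha]⟩, fun n => ?_⟩
  calc (n : ℝ) ^ r * t ^ n = (n : ℝ) ^ r * (t / a) ^ n * a ^ n := by
        rw [div_pow, mul_assoc, div_mul_cancel₀ _ (by positivity)]
    _ ≤ max C₀ 0 * a ^ n := by
        gcongr
        exact (hC₀ (Set.mem_range_self n)).trans (le_max_left _ _)
    _ < (max C₀ 0 + 1) * a ^ n := by gcongr; linarith

lemma factorial_le_factorial_mul_pow {k m : ℕ} (hk : k ≤ m) :
    m.factorial ≤ k.factorial * m ^ (m - k) := by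
  rw [← Nat.factorial_mul_descFactorial (Nat.sub_le m k), Nat.sub_sub_self hk]
  exact Nat.mul_le_mul_left _ (Nat.descFactorial_le_pow m _)

lemma sum_range_choose_le (m p : ℕ) :
    ∑ i ∈ range (p + 1), (m.choose i : ℝ) ≤ (p + 1) * ((m : ℝ) + 1) ^ p := by
  calc ∑ i ∈ range (p + 1), (m.choose i : ℝ) ≤ ∑ _i ∈ range (p + 1), ((m : ℝ) + 1) ^ p := by
        gcongr with i hi
        calc (m.choose i : ℝ) ≤ (m : ℝ) ^ i := by exact_mod_cast Nat.choose_le_pow m i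
          _ ≤ ((m : ℝ) + 1) ^ i := by gcongr; linarith
          _ ≤ ((m : ℝ) + 1) ^ p := pow_le_pow_right₀ (by linarith) (by grind)
    _ = (p + 1) * ((m : ℝ) + 1) ^ p := by simp

def cornerSimplex (ι : Type*) [Fintype ι] (c : ℝ) : Set (ι → ℝ) :=
  {x | (∀ i, 0 < x i) ∧ ∑ i, x i ≤ c}

lemma measurableSet_cornerSimplex (ι : Type*) [Fintype ι] (c : ℝ) :
    MeasurableSet (cornerSimplex ι c) := by
  refine .inter (measurableSet_setOfPred.2 (Measurable.forall fun i => ?_))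
    (measurableSet_le (Finset.measurable_sum _ fun i _ => measurable_pi_apply i) measurable_const)
  exact measurableSet_setOfPred.1 (measurableSet_lt measurable_const (measurable_pi_apply i))

lemma cornerSimplex_eq_empty {ι : Type*} [Fintype ι] {c : ℝ} (hc : c < 0) :
    cornerSimplex ι c = ∅ := by
  refine Set.eq_empty_of_forall_notMem fun x ⟨hpos, hsum⟩ => ?_
  have := Finset.sum_nonneg fun i (_ : i ∈ Finset.univ) => (hpos i).le
  linarith

lemma cornerSimplex_succ_slice (k : ℕ) (c t : ℝ) :
    Prod.mk t ⁻¹' ((MeasurableEquiv.piFinSuccAbove (fun _ : Fin (k + 1) => ℝ) 0).symm ⁻¹'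
      cornerSimplex (Fin (k + 1)) c) =
    if 0 < t then cornerSimplex (Fin k) (c - t) else ∅ := by
  ext y
  split_ifs with ht
  · simp [cornerSimplex, Fin.forall_fin_succ, Fin.sum_univ_succ, ht, le_sub_iff_add_le']
  · simp [cornerSimplex, Fin.forall_fin_succ, ht]

lemma volume_cornerSimplex_fin_le (k : ℕ) (c : ℝ) :
    volume (cornerSimplex (Fin k) c) ≤ ENNReal.ofReal (c ^ k / k.factorial) := by
  induction k generalizing c with
  | zero =>
    refine (measure_mono (Set.subset_univ _)).trans ?_
    simp [volume_pi]
  | succ k ih =>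
    set e := MeasurableEquiv.piFinSuccAbove (fun _ : Fin (k + 1) => ℝ) 0
    have hslice : ∀ t, volume (Prod.mk t ⁻¹' (e.symm ⁻¹' cornerSimplex (Fin (k + 1)) c)) ≤
        (Set.Ioc 0 c).indicator (fun t => ENNReal.ofReal ((c - t) ^ k / k.factorial)) t := by
      intro t
      rw [cornerSimplex_succ_slice]
      by_cases ht : t ∈ Set.Ioc 0 c
      · simpa [ht.1, Set.indicator_of_mem ht] using ih (c - t)
      split_ifs with ht₀
      · rw [cornerSimplex_eq_empty (by grind), measure_empty]
        exact zero_le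
      · simp
    have hS : MeasurableSet (e.symm ⁻¹' cornerSimplex (Fin (k + 1)) c) :=
      e.symm.measurable (measurableSet_cornerSimplex _ c)
    calc volume (cornerSimplex (Fin (k + 1)) c)
        = volume (e.symm ⁻¹' cornerSimplex (Fin (k + 1)) c) :=
          ((volume_preserving_piFinSuccAbove _ 0).symm.measure_preimage
            (measurableSet_cornerSimplex _ c).nullMeasurableSet).symm
      _ ≤ ∫⁻ t in Set.Ioc 0 c, ENNReal.ofReal ((c - t) ^ k / k.factorial) := by
          rw [Measure.volume_eq_prod, Measure.prod_apply hS,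
            ← lintegral_indicator measurableSet_Ioc]
          exact lintegral_mono hslice
      _ ≤ ENNReal.ofReal (c ^ (k + 1) / (k + 1).factorial) := by
          rcases le_or_gt c 0 with hc | hc
          · simp [Set.Ioc_eq_empty_of_le hc]
          rw [← ofReal_integral_eq_lintegral_ofReal, ← intervalIntegral.integral_of_le hc.le,
            intervalIntegral.integral_div,
            intervalIntegral.integral_comp_sub_left (fun s => s ^ k), integral_pow]
          · refine ENNReal.ofReal_le_ofReal (le_of_eq ?_)
            rw [sub_zero, sub_self, zero_pow k.succ_ne_zero, sub_zero, Nat.factorial_succ]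
            push_cast
            field_simp
          · exact (by fun_prop : Continuous fun t : ℝ => (c - t) ^ k / k.factorial)
              |>.integrableOn_Icc.mono_set Set.Ioc_subset_Icc_self
          · filter_upwards [ae_restrict_mem measurableSet_Ioc] with t ht
            have : 0 ≤ c - t := by linarith [ht.2]
            positivity

lemma volume_cornerSimplex_le (ι : Type*) [Fintype ι] (c : ℝ) :
    volume (cornerSimplex ι c) ≤
      ENNReal.ofReal (c ^ Fintype.card ι / (Fintype.card ι).factorial) := by
  set e := (Fintype.equivFin ι).symm
  have hpre : MeasurableEquiv.piCongrLeft (fun _ => ℝ) e ⁻¹' cornerSimplex ι c =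
      cornerSimplex (Fin (Fintype.card ι)) c := by
    ext y
    simp only [cornerSimplex, Set.mem_preimage, Set.mem_ofPred_eq]
    rw [e.symm.forall_congr_left, ← e.sum_comp]
    simp only [Equiv.symm_symm, MeasurableEquiv.piCongrLeft_apply_apply]
  rw [← (volume_measurePreserving_piCongrLeft (fun _ => ℝ) e).measure_preimage
    (measurableSet_cornerSimplex ι c).nullMeasurableSet, hpre]
  exact volume_cornerSimplex_fin_le _ c

def cubeSlab {ι : Type*} (K : Finset ι) (c : ℝ) : Set (ι → ℝ) :=
  {x | (∀ i, x i ∈ Set.Ioc 0 1) ∧ ∑ i ∈ K, x i ≤ c}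

lemma volume_cubeSlab_le {ι : Type*} [Fintype ι] [DecidableEq ι] (K : Finset ι) (c : ℝ) :
    volume (cubeSlab K c) ≤ ENNReal.ofReal (c ^ #K / (#K).factorial) := by
  set e := MeasurableEquiv.piEquivPiSubtypeProd (fun _ : ι => ℝ) (· ∈ K)
  have hsub : cubeSlab K c ⊆
      e ⁻¹' (cornerSimplex K c ×ˢ Set.univ.pi fun _ => Set.Ioc 0 1) := by
    rintro x ⟨hx, hsum⟩
    refine ⟨⟨fun i => (hx i).1, ?_⟩, fun i _ => hx i⟩
    simpa [e, Finset.sum_attach K x] using hsum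
  calc _ ≤ volume (e ⁻¹' (cornerSimplex K c ×ˢ Set.univ.pi fun _ => Set.Ioc 0 1)) :=
        measure_mono hsub
    _ = volume (cornerSimplex K c) *
          volume (Set.univ.pi fun (_ : {i // i ∉ K}) => Set.Ioc (0 : ℝ) 1) := by
        rw [(volume_preserving_piEquivPiSubtypeProd _ _).measure_preimage
          ((measurableSet_cornerSimplex _ c).prod
            (.univ_pi fun _ => measurableSet_Ioc)).nullMeasurableSet,
          Measure.volume_eq_prod, Measure.prod_prod]
        congr!
    _ ≤ _ := by simpa [volume_pi_pi] using volume_cornerSimplex_le K c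

lemma factorial_mul_volume_cubeSlab_le {m q : ℕ} (K : Finset (Fin m)) (hK : m - #K ≤ q) :
    (m.factorial : ℝ≥0∞) * volume (cubeSlab K (1 / 2)) ≤
      ENNReal.ofReal (((m : ℝ) + 1) ^ q * 2 ^ q / 2 ^ m) := by
  set k := #K
  have hkm : k ≤ m := (card_le_univ K).trans_eq (Fintype.card_fin m)
  have hfact : (m.factorial : ℝ) ≤ k.factorial * ((m : ℝ) + 1) ^ q := by
    calc (m.factorial : ℝ) ≤ k.factorial * (m : ℝ) ^ (m - k) := by
          exact_mod_cast factorial_le_factorial_mul_pow hkm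
      _ ≤ k.factorial * ((m : ℝ) + 1) ^ (m - k) := by gcongr; linarith
      _ ≤ k.factorial * ((m : ℝ) + 1) ^ q := by gcongr; linarith
  have hpow : (1 / 2 : ℝ) ^ k ≤ 2 ^ q / 2 ^ m := by
    rw [one_div_pow, div_le_div_iff₀ (by positivity) (by positivity), one_mul, ← pow_add]
    exact pow_le_pow_right₀ one_le_two (by omega)
  calc (m.factorial : ℝ≥0∞) * volume (cubeSlab K (1 / 2))
      ≤ ENNReal.ofReal m.factorial * ENNReal.ofReal ((1 / 2) ^ k / k.factorial) := by
        rw [ENNReal.ofReal_natCast]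
        gcongr
        exact volume_cubeSlab_le K _
    _ = ENNReal.ofReal (m.factorial / k.factorial * (1 / 2) ^ k) := by
        rw [← ENNReal.ofReal_mul (by positivity)]
        congr 1
        ring
    _ ≤ ENNReal.ofReal (((m : ℝ) + 1) ^ q * (2 ^ q / 2 ^ m)) := by
        gcongr
        rw [div_le_iff₀ (by positivity)]
        linarith
    _ = _ := by rw [mul_div_assoc]

lemma measurable_emb (m : ℕ) : Measurable (emb m) := by
  refine measurable_pi_iff.2 fun i => Fin.lastCases ?_ (fun j => ?_) i
  · simp only [emb, Fin.snoc_last]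
    fun_prop
  · simpa [emb] using measurable_pi_apply j

lemma measurableSet_simplex (m : ℕ) : MeasurableSet (Simplex m) := by
  refine .inter (measurableSet_setOfPred.2 (Measurable.forall fun i => ?_))
    (measurableSet_eq_fun (Finset.measurable_sum _ fun i _ => measurable_pi_apply i)
      measurable_const)
  exact measurableSet_setOfPred.1 (measurableSet_lt measurable_const (measurable_pi_apply i))

lemma measurableSet_gamma (m q : ℕ) : MeasurableSet (Gamma m q) := by
  refine (measurableSet_simplex m).inter
    (measurableSet_setOfPred.2 (Measurable.forall fun J => Measurable.forall fun _ => ?_))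
  exact measurableSet_setOfPred.1
    (measurableSet_lt (Finset.measurable_sum J fun j _ => measurable_pi_apply j) measurable_const)

lemma simplexProb_le (m : ℕ) {A : Set (Fin (m + 1) → ℝ)} (hA : MeasurableSet A) :
    simplexProb m A ≤ m.factorial * volume (emb m ⁻¹' A) := by
  rw [simplexProb, Measure.smul_apply, Measure.map_apply (measurable_emb m) hA, smul_eq_mul]
  gcongr
  exact Measure.restrict_le_self

lemma ae_mem_simplex (m : ℕ) : ∀ᵐ ℓ ∂simplexProb m, ℓ ∈ Simplex m := by
  change simplexProb m (Simplex m)ᶜ = 0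
  rw [simplexProb, Measure.smul_apply,
    Measure.map_apply (measurable_emb m) (measurableSet_simplex m).compl,
    Measure.restrict_apply' (measurable_emb m (measurableSet_simplex m)), Set.preimage_compl,
    Set.compl_inter_self, measure_empty, smul_zero]

lemma le_one_of_mem_simplex {m : ℕ} {ℓ : Fin (m + 1) → ℝ} (hℓ : ℓ ∈ Simplex m)
    (i : Fin (m + 1)) : ℓ i ≤ 1 :=
  hℓ.2 ▸ Finset.single_le_sum (fun j _ => (hℓ.1 j).le) (Finset.mem_univ i)

lemma simplex_diff_gamma_subset_lambda {m q : ℕ} (hq : 0 < q) :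
    Simplex m \ Gamma m q ⊆ Lambda m q := by
  rintro ℓ ⟨hD, hG⟩
  refine ⟨hD, ?_⟩
  by_contra! hsmall
  refine hG ⟨hD, fun J hJ => ?_⟩
  calc ∑ i ∈ J, ℓ i < ∑ _i ∈ J, 1 / (2 * (q : ℝ)) :=
        sum_lt_sum_of_nonempty (card_pos.1 (hJ ▸ hq)) fun i _ => hsmall i
    _ = 1 / 2 := by
        rw [sum_const, hJ, nsmul_eq_mul]
        field_simp

lemma emb_preimage_simplex_diff_gamma_subset (m q : ℕ) :
    emb m ⁻¹' (Simplex m \ Gamma m q) ⊆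
      ⋃ J ∈ powersetCard q (univ : Finset (Fin (m + 1))),
        cubeSlab ({i | Fin.castSucc i ∉ J} : Finset (Fin m)) (1 / 2) := by
  rintro x ⟨hD, hG⟩
  set ℓ := emb m x
  obtain ⟨J, hJ, hsum⟩ : ∃ J : Finset (Fin (m + 1)), #J = q ∧ 1 / 2 ≤ ∑ i ∈ J, ℓ i := by
    simpa [Gamma, hD] using hG
  have hx : ∀ i, x i = ℓ (Fin.castSucc i) := by simp [ℓ, emb]
  refine Set.mem_biUnion (mem_powersetCard_univ.2 hJ) ⟨fun i => ?_, ?_⟩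
  · rw [hx]
    exact ⟨hD.1 _, le_one_of_mem_simplex hD _⟩
  · calc ∑ i ∈ {i | Fin.castSucc i ∉ J}, x i
        = ∑ j ∈ ({i | Fin.castSucc i ∉ J} : Finset (Fin m)).map Fin.castSuccEmb, ℓ j := by
          simp [hx]
      _ ≤ ∑ j ∈ Jᶜ, ℓ j :=
          sum_le_sum_of_subset_of_nonneg (by simp [subset_iff]) fun j _ _ => (hD.1 j).le
      _ = 1 - ∑ j ∈ J, ℓ j := by rw [← hD.2, ← sum_compl_add_sum J]; ring
      _ ≤ 1 / 2 := by linarith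

lemma sub_card_filter_castSucc_notMem_le {m : ℕ} (J : Finset (Fin (m + 1))) :
    m - #({i | Fin.castSucc i ∉ J} : Finset (Fin m)) ≤ #J := by
  have hsplit :=
    card_filter_add_card_filter_not (s := univ) (fun i : Fin m => Fin.castSucc i ∈ J)
  have hin : #({i | Fin.castSucc i ∈ J} : Finset (Fin m)) ≤ #J :=
    card_le_card_of_injOn Fin.castSucc (fun i hi => (mem_filter.1 hi).2)
      (Fin.castSucc_injective m).injOn
  rw [card_univ, Fintype.card_fin] at hsplit
  omega

lemma simplexProb_simplex_diff_gamma_le (m q : ℕ) :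
    simplexProb m (Simplex m \ Gamma m q) ≤
      ENNReal.ofReal (((m : ℝ) + 1) ^ (2 * q) * 2 ^ q / 2 ^ m) := by
  set P : ℝ := ((m : ℝ) + 1) ^ q * 2 ^ q / 2 ^ m
  calc simplexProb m (Simplex m \ Gamma m q)
      ≤ m.factorial * volume (emb m ⁻¹' (Simplex m \ Gamma m q)) :=
        simplexProb_le m ((measurableSet_simplex m).diff (measurableSet_gamma m q))
    _ ≤ ∑ J ∈ powersetCard q (univ : Finset (Fin (m + 1))),
          m.factorial * volume (cubeSlab ({i | Fin.castSucc i ∉ J} : Finset (Fin m)) (1 / 2)) := by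
        rw [← mul_sum]
        gcongr
        exact (measure_mono (emb_preimage_simplex_diff_gamma_subset m q)).trans
          (measure_biUnion_finset_le _ _)
    _ ≤ ∑ J ∈ powersetCard q (univ : Finset (Fin (m + 1))), ENNReal.ofReal P := by
        gcongr with J hJ
        refine factorial_mul_volume_cubeSlab_le _ ?_
        exact mem_powersetCard_univ.1 hJ ▸ sub_card_filter_castSucc_notMem_le J
    _ = ENNReal.ofReal ((m + 1).choose q * P) := by
        rw [sum_const, card_powersetCard, card_univ, Fintype.card_fin, nsmul_eq_mul,
          ENNReal.ofReal_mul (by positivity), ENNReal.ofReal_natCast]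
    _ ≤ ENNReal.ofReal (((m : ℝ) + 1) ^ q * P) := by
        gcongr
        exact_mod_cast Nat.choose_le_pow (m + 1) q
    _ = _ := by
        congr 1
        ring

lemma measureReal_withDensity_simplex_diff_gamma_le {m q : ℕ} (hq : 0 < q)
    {f : (Fin (m + 1) → ℝ) → ℝ} {B : ℝ} (hB : 0 ≤ B) (hf : ∀ ℓ ∈ Lambda m q, f ℓ ≤ B) :
    ((simplexProb m).withDensity fun ℓ => ENNReal.ofReal (f ℓ)).real (Simplex m \ Gamma m q) ≤
      B * (((m : ℝ) + 1) ^ (2 * q) * 2 ^ q / 2 ^ m) := by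
  have hbad := (measurableSet_simplex m).diff (measurableSet_gamma m q)
  refine ENNReal.toReal_le_of_le_ofReal (by positivity) ?_
  rw [withDensity_apply _ hbad, ENNReal.ofReal_mul hB]
  calc ∫⁻ ℓ in Simplex m \ Gamma m q, ENNReal.ofReal (f ℓ) ∂simplexProb m
      ≤ ∫⁻ _ in Simplex m \ Gamma m q, ENNReal.ofReal B ∂simplexProb m :=
        setLIntegral_mono measurable_const fun ℓ hℓ =>
          ENNReal.ofReal_le_ofReal (hf ℓ (simplex_diff_gamma_subset_lambda hq hℓ))
    _ ≤ _ := by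
        rw [setLIntegral_const]
        gcongr
        exact simplexProb_simplex_diff_gamma_le m q

lemma abs_sub_sum_choose_le {m p q : ℕ} {F : (Fin (m + 1) → ℝ) → ℝ}
    (hFconst : ∀ ℓ ∈ Gamma m q, F ℓ = ∑ i ∈ range (p + 1), (m.choose i : ℝ))
    (hFbd : ∀ ℓ ∈ Simplex m, 0 ≤ F ℓ ∧ F ℓ ≤ 2 * (m : ℝ) ^ p) {ℓ : Fin (m + 1) → ℝ}
    (hℓ : ℓ ∈ Simplex m) :
    |F ℓ - ∑ i ∈ range (p + 1), (m.choose i : ℝ)| ≤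
      (Simplex m \ Gamma m q).indicator (fun _ => (p + 3) * ((m : ℝ) + 1) ^ p) ℓ := by
  by_cases hG : ℓ ∈ Gamma m q
  · rw [hFconst ℓ hG, sub_self, abs_zero]
    exact Set.indicator_nonneg (fun _ _ => by positivity) _
  rw [Set.indicator_of_mem (Set.mem_sdiff_of_mem hℓ hG), abs_le]
  obtain ⟨h0, h1⟩ := hFbd ℓ hℓ
  have hS := sum_range_choose_le m p
  have hS0 : 0 ≤ ∑ i ∈ range (p + 1), (m.choose i : ℝ) := sum_nonneg fun i _ => Nat.cast_nonneg _
  have hmp : (m : ℝ) ^ p ≤ ((m : ℝ) + 1) ^ p := by gcongr; linarith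
  constructor <;> nlinarith

theorem stmt16_general (f : (m : ℕ) → (Fin (m+1) → ℝ) → ℝ)
    (hprob : ∀ m, ∫⁻ ℓ, ENNReal.ofReal (f m ℓ) ∂(simplexProb m) = 1)
    (hadm : ∀ p : ℕ, 1 ≤ p → ∃ A > (0:ℝ), ∃ b ∈ Set.Ioo (0:ℝ) 2,
        ∀ m : ℕ, ∀ ℓ ∈ Lambda m p, f m ℓ ≤ A * b^(m+1))
    (p : ℕ) (F : (m : ℕ) → (Fin (m+1) → ℝ) → ℝ)
    (hFmeas : ∀ m, Measurable (F m))
    (hFconst : ∀ m : ℕ, ∀ ℓ ∈ Gamma m (p+2),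
        F m ℓ = ∑ i ∈ Finset.range (p+1), (Nat.choose m i : ℝ))
    (hFbd : ∀ m : ℕ, ∀ ℓ ∈ Simplex m, 0 ≤ F m ℓ ∧ F m ℓ ≤ 2 * (m:ℝ)^p) :
    ∃ C > (0:ℝ), ∃ a ∈ Set.Ioo (0:ℝ) 1, ∀ m : ℕ, 2 ≤ m →
      |(∫ ℓ, F m ℓ
            ∂((simplexProb m).withDensity (fun ℓ => ENNReal.ofReal (f m ℓ))))
          - ∑ i ∈ Finset.range (p+1), (Nat.choose m i : ℝ)|
        < C * a^(m+1) := by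
  obtain ⟨A, hA, b, ⟨hb₀, hb₂⟩, hfA⟩ := hadm (p + 2) (by omega)
  obtain ⟨C, hC, a, ha, hlt⟩ :=
    exists_pow_mul_pow_lt (p + 2 * (p + 2)) (t := b / 2) (by positivity) (by linarith)
  set K : ℝ := (p + 3) * A * 2 ^ (p + 3)
  refine ⟨K * C, by positivity, a, ha, fun m _ => ?_⟩
  set ν := (simplexProb m).withDensity fun ℓ => ENNReal.ofReal (f m ℓ)
  set S := ∑ i ∈ range (p + 1), (m.choose i : ℝ)
  set M : ℝ := (p + 3) * ((m : ℝ) + 1) ^ p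
  have : IsProbabilityMeasure ν :=
    ⟨by rw [withDensity_apply _ .univ, Measure.restrict_univ]; exact hprob m⟩
  have hFs : ∀ᵐ ℓ ∂ν, |F m ℓ - S| ≤ (Simplex m \ Gamma m (p + 2)).indicator (fun _ => M) ℓ := by
    filter_upwards [withDensity_absolutelyContinuous _ _ (ae_mem_simplex m)] with ℓ hℓ
      using abs_sub_sum_choose_le (hFconst m) (hFbd m) hℓ
  calc |∫ ℓ, F m ℓ ∂ν - S| ≤ M * ν.real (Simplex m \ Gamma m (p + 2)) :=
        abs_integral_sub_le_mul_measureReal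
          ((measurableSet_simplex m).diff (measurableSet_gamma m _))
          (hFmeas m).aestronglyMeasurable hFs
    _ ≤ M * (A * b ^ (m + 1) * (((m : ℝ) + 1) ^ (2 * (p + 2)) * 2 ^ (p + 2) / 2 ^ m)) := by
        gcongr
        exact measureReal_withDensity_simplex_diff_gamma_le (by omega) (by positivity) (hfA m)
    _ = K * (((m + 1 : ℕ) : ℝ) ^ (p + 2 * (p + 2)) * (b / 2) ^ (m + 1)) := by
        simp only [M, K, div_pow]
        push_cast
        field_simp
        ring
    _ < K * (C * a ^ (m + 1)) := mul_lt_mul_of_pos_left (hlt (m + 1)) (by positivity)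
    _ = K * C * a ^ (m + 1) := by ring

/-- abstract averaging theorem: if ν_n = f_n·μ_n is an admissible
sequence of probability measures and F_n is measurable, equal to ∑_{i=0}^p C(n-1,i)
on Γ_{p+2} and with 0 ≤ F_n ≤ 2(n-1)^p on Δ^{n-1}, then
|∫ F_n dν_n − ∑_{i=0}^p C(n-1,i)| < C·aⁿ for all n ≥ 3 (n = m+1). -/
theorem stmt16 (f : (m : ℕ) → (Fin (m+1) → ℝ) → ℝ)
    (hmeas : ∀ m, Measurable (f m))
    (hnonneg : ∀ m ℓ, 0 ≤ f m ℓ)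
    (hprob : ∀ m, ∫⁻ ℓ, ENNReal.ofReal (f m ℓ) ∂(simplexProb m) = 1)
    (hadm : ∀ p : ℕ, 1 ≤ p → ∃ A > (0:ℝ), ∃ b ∈ Set.Ioo (0:ℝ) 2,
        ∀ m : ℕ, ∀ ℓ ∈ Lambda m p, f m ℓ ≤ A * b^(m+1))
    (p : ℕ) (F : (m : ℕ) → (Fin (m+1) → ℝ) → ℝ)
    (hFmeas : ∀ m, Measurable (F m))
    (hFconst : ∀ m : ℕ, ∀ ℓ ∈ Gamma m (p+2),
        F m ℓ = ∑ i ∈ Finset.range (p+1), (Nat.choose m i : ℝ))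
    (hFbd : ∀ m : ℕ, ∀ ℓ ∈ Simplex m, 0 ≤ F m ℓ ∧ F m ℓ ≤ 2 * (m:ℝ)^p) :
    ∃ C > (0:ℝ), ∃ a ∈ Set.Ioo (0:ℝ) 1, ∀ m : ℕ, 2 ≤ m →
      |(∫ ℓ, F m ℓ
            ∂((simplexProb m).withDensity (fun ℓ => ENNReal.ofReal (f m ℓ))))
          - ∑ i ∈ Finset.range (p+1), (Nat.choose m i : ℝ)|
        < C * a^(m+1) :=
  stmt16_general f hprob hadm p F hFmeas hFconst hFbd
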